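/- arXiv:2404.10098 — 3 statements merged into one kernel-verified Lean document; each statement's English description precedes it below -/
import Mathlib

section
/- Let ξ be a random vector in a normed space X and Q ⊆ X a subspace. Let ζ be a random vector in the dual X* such that ζ ∈ Q⊥ almost surely. Then for any 1 ≤ p < ∞, (E[dist(ξ,Q)^p])^{1/p} ≥ E[⟨ξ,ζ⟩] / (E[‖ζ‖_{X*}^{p'}])^{1/p'}, where p' is the Hölder conjugate of p, assuming all expectations are finite. -/
/-!
A functional `ζ` vanishing on `Q` satisfies `ζ x = ζ (x - y) ≤ ‖ζ‖ ‖x - y‖` for every `y ∈ Q`,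
hence `⟨ξ, ζ⟩ ≤ ‖ζ‖ dist(ξ, Q)` pointwise. Integrating and applying Hölder's inequality to the
right-hand side gives `E⟨ξ, ζ⟩ ≤ (E‖ζ‖^{p'})^{1/p'} (E dist(ξ, Q)^p)^{1/p}`.
-/

open MeasureTheory Metric

lemma ContinuousLinearMap.apply_le_norm_mul_infDist {E : Type*} [SeminormedAddCommGroup E]
    [NormedSpace ℝ E] (f : E →L[ℝ] ℝ) {Q : Submodule ℝ E} (hf : ∀ y ∈ Q, f y = 0) (x : E) :
    f x ≤ ‖f‖ * infDist x (Q : Set E) := by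
  rcases (norm_nonneg f).eq_or_lt with hzero | hpos
  · rw [← hzero, zero_mul]
    exact (le_abs_self _).trans (by simpa [← hzero] using f.le_opNorm x)
  rw [← div_le_iff₀' hpos, le_infDist ⟨0, Q.zero_mem⟩]
  intro y hy
  rw [div_le_iff₀' hpos, dist_eq_norm]
  calc f x = f (x - y) := by rw [map_sub, hf y hy, sub_zero]
    _ ≤ |f (x - y)| := le_abs_self _
    _ ≤ ‖f‖ * ‖x - y‖ := f.le_opNorm _

lemma memLp_ofReal_of_integrable_rpow {Ω : Type*} [MeasurableSpace Ω] {μ : Measure Ω}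
    {f : Ω → ℝ} (hf : ∀ ω, 0 ≤ f ω) {p : ℝ} (hp : 0 < p)
    (hint : Integrable (fun ω => f ω ^ p) μ) : MemLp f (ENNReal.ofReal p) μ := by
  have hmeas : AEStronglyMeasurable f μ := by
    have hroot : f = fun ω => (f ω ^ p) ^ p⁻¹ := by
      funext ω
      rw [← Real.rpow_mul (hf ω), mul_inv_cancel₀ hp.ne', Real.rpow_one]
    rw [hroot]
    exact (Real.continuous_rpow_const (inv_nonneg.mpr hp.le)).comp_aestronglyMeasurable
      hint.aestronglyMeasurable
  rw [← integrable_norm_rpow_iff hmeas (by simpa using hp) ENNReal.ofReal_ne_top,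
    ENNReal.toReal_ofReal hp.le]
  simpa only [Real.norm_of_nonneg (hf _)] using hint

theorem stmt1_general {X : Type*} [NormedAddCommGroup X] [NormedSpace ℝ X]
    {Ω : Type*} [MeasurableSpace Ω] (μ : Measure Ω)
    (Q : Submodule ℝ X) (ξ : Ω → X) (ζ : Ω → X →L[ℝ] ℝ)
    (p p' : ℝ) (hconj : p.HolderConjugate p')
    (hann : ∀ᵐ ω ∂μ, ∀ y ∈ Q, ζ ω y = 0)
    (h1 : Integrable (fun ω => (Metric.infDist (ξ ω) (Q : Set X)) ^ p) μ)
    (h2 : Integrable (fun ω => ζ ω (ξ ω)) μ)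
    (h3 : Integrable (fun ω => ‖ζ ω‖ ^ p') μ) :
    (∫ ω, (Metric.infDist (ξ ω) (Q : Set X)) ^ p ∂μ) ^ (1/p)
      ≥ (∫ ω, ζ ω (ξ ω) ∂μ) / (∫ ω, ‖ζ ω‖ ^ p' ∂μ) ^ (1/p') := by
  set dist_Q : Ω → ℝ := fun ω => infDist (ξ ω) (Q : Set X)
  set norm_ζ : Ω → ℝ := fun ω => ‖ζ ω‖
  have hdist : MemLp dist_Q (ENNReal.ofReal p) μ :=
    memLp_ofReal_of_integrable_rpow (fun _ => infDist_nonneg) hconj.pos h1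
  have hnorm : MemLp norm_ζ (ENNReal.ofReal p') μ :=
    memLp_ofReal_of_integrable_rpow (fun _ => norm_nonneg _) hconj.symm.pos h3
  have hpointwise : ∀ᵐ ω ∂μ, ζ ω (ξ ω) ≤ norm_ζ ω * dist_Q ω :=
    hann.mono fun ω hω => (ζ ω).apply_le_norm_mul_infDist hω (ξ ω)
  have hprod : Integrable (fun ω => norm_ζ ω * dist_Q ω) μ := by
    have := hconj.symm.ennrealOfReal
    exact hnorm.integrable_mul hdist
  refine div_le_of_le_mul₀ (by positivity)
    (Real.rpow_nonneg (integral_nonneg fun _ => Real.rpow_nonneg infDist_nonneg _) _) ?_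
  calc ∫ ω, ζ ω (ξ ω) ∂μ ≤ ∫ ω, norm_ζ ω * dist_Q ω ∂μ := integral_mono_ae h2 hprod hpointwise
    _ ≤ (∫ ω, norm_ζ ω ^ p' ∂μ) ^ (1 / p') * (∫ ω, dist_Q ω ^ p ∂μ) ^ (1 / p) :=
      integral_mul_le_Lp_mul_Lq_of_nonneg hconj.symm (.of_forall fun _ => norm_nonneg _)
        (.of_forall fun _ => infDist_nonneg) hnorm hdist
    _ = _ := mul_comm _ _

/-- Lemma 1: for a random vector `ξ` in `X`, a subspace `Q`, and a random functional `ζ`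
lying a.s. in the annihilator of `Q`, with `1/p + 1/p' = 1`,
`(E dist(ξ,Q)^p)^{1/p} ≥ E⟨ξ,ζ⟩ / (E‖ζ‖^{p'})^{1/p'}`. -/
theorem stmt1 {X : Type*} [NormedAddCommGroup X] [NormedSpace ℝ X]
    {Ω : Type*} [MeasurableSpace Ω] (μ : Measure Ω) [IsProbabilityMeasure μ]
    (Q : Submodule ℝ X) (ξ : Ω → X) (ζ : Ω → X →L[ℝ] ℝ)
    (p p' : ℝ) (hconj : p.HolderConjugate p')
    (hann : ∀ᵐ ω ∂μ, ∀ y ∈ Q, ζ ω y = 0)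
    (h1 : Integrable (fun ω => (Metric.infDist (ξ ω) (Q : Set X)) ^ p) μ)
    (h2 : Integrable (fun ω => ζ ω (ξ ω)) μ)
    (h3 : Integrable (fun ω => ‖ζ ω‖ ^ p') μ) :
    (∫ ω, (Metric.infDist (ξ ω) (Q : Set X)) ^ p ∂μ) ^ (1/p)
      ≥ (∫ ω, ζ ω (ξ ω) ∂μ) / (∫ ω, ‖ζ ω‖ ^ p' ∂μ) ^ (1/p') :=
  stmt1_general μ Q ξ ζ p p' hconj hann h1 h2 h3
end

section
/- Let 1 < q ≤ 2 and let K ⊆ ℝ^N be a set that is unconditional (closed under arbitrary sign changes of coordinates) and invariant under cyclic shifts of coordinates. Then for any n < N, the Kolmogorov width satisfies d_n(K, ℓ_q^N) ≥ c_q (1 − n/N)^{1/q} sup_{x∈K} ‖x‖_q, for a constant c_q > 0 depending only on q. -/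
open MeasureTheory

/-- The ℓ_q norm on `ℝ^N`. -/
noncomputable def lqN {N : ℕ} (q : ℝ) (x : Fin N → ℝ) : ℝ := (∑ i, |x i| ^ q) ^ (1/q)

/-- Distance from `x` to a subspace `Q` in the ℓ_q norm. -/
noncomputable def distq {N : ℕ} (q : ℝ) (x : Fin N → ℝ) (Q : Submodule ℝ (Fin N → ℝ)) : ℝ :=
  ⨅ y : Q, lqN q (fun i => x i - (y : Fin N → ℝ) i)

/-- The Kolmogorov width `d_n(K, ℓ_q^N)`. -/
noncomputable def dKol {N : ℕ} (n : ℕ) (q : ℝ) (K : Set (Fin N → ℝ)) : ℝ :=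
  ⨅ Q : {Q : Submodule ℝ (Fin N → ℝ) // Module.finrank ℝ Q ≤ n},
    ⨆ x : K, distq q x.1 Q.1

/-! Let `P` be the orthogonal projection onto `Qᗮ`; its trace is `N - dim Q ≥ N - n`. For `y`
put `w = |y|^(q-1)` and test `y` against the random functional `f_ε = P (ε ⊙ w)`, which vanishes
on `Q`. Averaged over signs, `⟪|y|, |f_ε|⟫` is at least `∑ P_ii |y_i|^q`, while Khintchine's
inequality for the exponent `p = q' ≥ 2` and Jensen's inequality for the weights `P_ij²`
(`∑_j P_ij² = P_ii ≤ 1`) bound the average of `‖f_ε‖_p^p` by `C_p ∑ P_ii |y_i|^q`. Hence some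
`ε` makes `⟪|y|, |f_ε|⟫` large compared with `‖f_ε‖_p`, and by Hölder duality a sign change of
`y` is far from `Q`. Averaging `∑ P_ii |x_{i+s}|^q` over the cyclic shifts `s` of `x` replaces
the diagonal of `P` by its trace, which gives the factor `1 - n/N`. -/

open Finset Real Module Matrix
open scoped Nat

lemma rpow_le_mul_exp {x r : ℝ} (hx : 0 ≤ x) (hr : 0 ≤ r) :
    x ^ r ≤ (1 + (⌈r⌉₊)!) * exp x := by
  have hexp : 0 ≤ (⌈r⌉₊)! * exp x := by positivity
  rcases le_total x 1 with hx1 | hx1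
  · calc x ^ r ≤ 1 := rpow_le_one hx hx1 hr
      _ ≤ exp x := one_le_exp hx
      _ ≤ (1 + (⌈r⌉₊)!) * exp x := by linarith
  · calc x ^ r ≤ x ^ (⌈r⌉₊ : ℝ) := rpow_le_rpow_of_exponent_le hx1 (Nat.le_ceil r)
      _ = x ^ ⌈r⌉₊ := rpow_natCast x _
      _ ≤ (⌈r⌉₊)! * exp x := by
        rw [← div_le_iff₀' (by positivity)]
        exact pow_div_factorial_le_exp _ hx _
      _ ≤ (1 + (⌈r⌉₊)!) * exp x := by linarith [exp_pos x]

lemma abs_rpow_le_mul_exp_add_exp {r s : ℝ} (hr : 0 ≤ r) (hs : 0 < s) (z : ℝ) :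
    |z| ^ r ≤ s ^ r * (1 + (⌈r⌉₊)!) * (exp (s⁻¹ * z) + exp (-s⁻¹ * z)) :=
  calc |z| ^ r = s ^ r * |s⁻¹ * z| ^ r := by
        rw [abs_mul, abs_inv, abs_of_pos hs, mul_rpow (by positivity) (abs_nonneg _),
          inv_rpow hs.le, mul_inv_cancel_left₀ (rpow_pos_of_pos hs r).ne']
    _ ≤ s ^ r * ((1 + (⌈r⌉₊)!) * exp |s⁻¹ * z|) := by
        gcongr
        exact rpow_le_mul_exp (abs_nonneg _) hr
    _ ≤ s ^ r * (1 + (⌈r⌉₊)!) * (exp (s⁻¹ * z) + exp (-s⁻¹ * z)) := by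
        rw [neg_mul, ← mul_assoc]
        gcongr
        exact exp_abs_le _

lemma rpow_sum_mul_le_sum_mul_rpow {ι : Type*} (s : Finset ι) {w f : ι → ℝ}
    (hw : ∀ i, 0 ≤ w i) (hw1 : ∑ i ∈ s, w i ≤ 1) (hf : ∀ i, 0 ≤ f i) {θ : ℝ} (hθ : 1 ≤ θ) :
    (∑ i ∈ s, w i * f i) ^ θ ≤ ∑ i ∈ s, w i * f i ^ θ := by
  have hT : 0 ≤ ∑ i ∈ s, w i * f i ^ θ :=
    sum_nonneg fun i _ => mul_nonneg (hw i) (rpow_nonneg (hf i) θ)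
  calc (∑ i ∈ s, w i * f i) ^ θ ≤ ((∑ i ∈ s, w i * f i ^ θ) ^ θ⁻¹) ^ θ := by
        gcongr
        · exact sum_nonneg fun i _ => mul_nonneg (hw i) (hf i)
        calc ∑ i ∈ s, w i * f i
            ≤ (∑ i ∈ s, w i) ^ (1 - θ⁻¹) * (∑ i ∈ s, w i * f i ^ θ) ^ θ⁻¹ :=
              inner_le_weight_mul_Lp_of_nonneg s hθ w f hw hf
          _ ≤ 1 * (∑ i ∈ s, w i * f i ^ θ) ^ θ⁻¹ := by
              gcongr
              exact rpow_le_one (sum_nonneg fun i _ => hw i) hw1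
                (sub_nonneg.2 (inv_le_one_of_one_le₀ hθ))
          _ = (∑ i ∈ s, w i * f i ^ θ) ^ θ⁻¹ := one_mul _
    _ = ∑ i ∈ s, w i * f i ^ θ := rpow_inv_rpow hT (by positivity)

section Rademacher

variable {ι : Type*} [Fintype ι]

def boolSign (b : Bool) : ℝ := if b then 1 else -1

@[simp] lemma boolSign_true : boolSign true = 1 := rfl

@[simp] lemma boolSign_false : boolSign false = -1 := rfl

lemma boolSign_not (b : Bool) : boolSign (!b) = -boolSign b := by
  cases b <;> simp

lemma boolSign_mul_self (b : Bool) : boolSign b * boolSign b = 1 := by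
  cases b <;> simp

lemma abs_boolSign (b : Bool) : |boolSign b| = 1 := by
  cases b <;> simp

lemma mulVec_boolSign_mul_apply (A : Matrix ι ι ℝ) (w : ι → ℝ) (ε : ι → Bool) (i : ι) :
    (A *ᵥ fun j => boolSign (ε j) * w j) i = ∑ j, A i j * w j * boolSign (ε j) := by
  simp only [mulVec, dotProduct]
  exact sum_congr rfl fun _ _ => by ring

noncomputable def khintchineConst (r : ℝ) : ℝ := 2 * exp (1 / 2) * (1 + (⌈r⌉₊)!)

lemma khintchineConst_pos (r : ℝ) : 0 < khintchineConst r := by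
  unfold khintchineConst
  positivity

variable [DecidableEq ι]

lemma sum_boolSign_mul_boolSign (i j : ι) :
    ∑ ε : ι → Bool, boolSign (ε i) * boolSign (ε j) = if i = j then 2 ^ Fintype.card ι else 0 := by
  split_ifs with hij
  · subst hij
    simp [boolSign_mul_self]
  · -- flipping the `i`-th sign negates every summand
    let flip : (ι → Bool) ≃ (ι → Bool) :=
      Equiv.piCongrRight fun k => if k = i then Equiv.boolNot else Equiv.refl Bool
    have h := Equiv.sum_comp flip fun ε => boolSign (ε i) * boolSign (ε j)
    simp only [flip, Equiv.piCongrRight_apply, Pi.map_apply, if_neg (Ne.symm hij), ↓reduceIte,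
      Equiv.boolNot_apply, Equiv.refl_apply, boolSign_not, neg_mul, sum_neg_distrib] at h
    linarith

lemma sum_boolSign_mul_sum (a : ι → ℝ) (i : ι) :
    ∑ ε : ι → Bool, boolSign (ε i) * ∑ j, a j * boolSign (ε j) = 2 ^ Fintype.card ι * a i := by
  simp_rw [mul_sum]
  rw [sum_comm]
  simp_rw [mul_left_comm (boolSign _) (a _), ← mul_sum, sum_boolSign_mul_boolSign]
  simp [mul_comm]

lemma sum_exp_mul_sum_boolSign_le (c : ι → ℝ) (t : ℝ) :
    ∑ ε : ι → Bool, exp (t * ∑ j, c j * boolSign (ε j))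
      ≤ 2 ^ Fintype.card ι * exp (t ^ 2 * (∑ j, c j ^ 2) / 2) := by
  calc ∑ ε : ι → Bool, exp (t * ∑ j, c j * boolSign (ε j))
      = ∏ j, ∑ b, exp (t * c j * boolSign b) := by
        rw [Fintype.prod_sum]
        simp_rw [mul_sum, exp_sum, mul_assoc]
    _ = ∏ j, 2 * cosh (t * c j) := by
        simp [cosh_eq, mul_div_cancel₀]
    _ ≤ ∏ j, 2 * exp ((t * c j) ^ 2 / 2) :=
        prod_le_prod (fun j _ => by positivity)
          fun j _ => mul_le_mul_of_nonneg_left (cosh_le_exp_half_sq _) zero_le_two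
    _ = 2 ^ Fintype.card ι * exp (t ^ 2 * (∑ j, c j ^ 2) / 2) := by
        rw [prod_mul_distrib, prod_const, Finset.card_univ, ← exp_sum, mul_sum, sum_div]
        simp only [mul_pow]

theorem sum_abs_sum_boolSign_rpow_le {r : ℝ} (hr : 0 < r) (c : ι → ℝ) :
    ∑ ε : ι → Bool, |∑ j, c j * boolSign (ε j)| ^ r
      ≤ khintchineConst r * 2 ^ Fintype.card ι * (∑ j, c j ^ 2) ^ (r / 2) := by
  obtain ⟨σ, hσ_def⟩ : ∃ σ, ∑ j, c j ^ 2 = σ := ⟨_, rfl⟩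
  have hσ_nonneg : 0 ≤ σ := hσ_def ▸ sum_nonneg fun j _ => sq_nonneg (c j)
  rw [hσ_def]
  rcases hσ_nonneg.eq_or_lt with hσ | hσ
  · have hc : ∀ j, c j = 0 := fun j =>
      pow_eq_zero_iff two_ne_zero |>.1 <| (sum_eq_zero_iff_of_nonneg fun j _ => sq_nonneg (c j)).1
        (hσ_def.trans hσ.symm) j (mem_univ j)
    simp only [hc, zero_mul, sum_const_zero, abs_zero, zero_rpow hr.ne']
    have := khintchineConst_pos r
    positivity
  set s := √σ with hs_def
  have hs : 0 < s := sqrt_pos.2 hσ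
  have hsσ : s⁻¹ ^ 2 * σ = 1 := by rw [inv_pow, sq_sqrt hσ.le, inv_mul_cancel₀ hσ.ne']
  calc ∑ ε : ι → Bool, |∑ j, c j * boolSign (ε j)| ^ r
      ≤ ∑ ε : ι → Bool, s ^ r * (1 + (⌈r⌉₊)!) * (exp (s⁻¹ * ∑ j, c j * boolSign (ε j))
          + exp (-s⁻¹ * ∑ j, c j * boolSign (ε j))) :=
        sum_le_sum fun ε _ => abs_rpow_le_mul_exp_add_exp hr.le hs _
    _ ≤ s ^ r * (1 + (⌈r⌉₊)!)
          * (2 ^ Fintype.card ι * exp (1 / 2) + 2 ^ Fintype.card ι * exp (1 / 2)) := by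
        rw [← mul_sum, sum_add_distrib]
        gcongr
        · have h := sum_exp_mul_sum_boolSign_le c s⁻¹
          rwa [hσ_def, hsσ] at h
        · have h := sum_exp_mul_sum_boolSign_le c (-s⁻¹)
          rwa [hσ_def, neg_sq, hsσ] at h
    _ = khintchineConst r * 2 ^ Fintype.card ι * σ ^ (r / 2) := by
        rw [khintchineConst, hs_def, sqrt_eq_rpow, ← rpow_mul hσ.le]
        ring_nf

end Rademacher

namespace Matrix

variable {ι : Type*} [Fintype ι]

lemma IsSymm.sum_sq_eq_diag {P : Matrix ι ι ℝ} (hs : P.IsSymm) (hi : IsIdempotentElem P)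
    (i : ι) : ∑ j, P i j ^ 2 = P i i := by
  conv_rhs => rw [← hi]
  simp only [mul_apply, sq, hs.apply]

lemma IsSymm.diag_nonneg {P : Matrix ι ι ℝ} (hs : P.IsSymm) (hi : IsIdempotentElem P)
    (i : ι) : 0 ≤ P i i :=
  hs.sum_sq_eq_diag hi i ▸ sum_nonneg fun _ _ => sq_nonneg _

lemma IsSymm.diag_le_one {P : Matrix ι ι ℝ} (hs : P.IsSymm) (hi : IsIdempotentElem P)
    (i : ι) : P i i ≤ 1 := by
  have h : P i i ^ 2 ≤ P i i :=
    hs.sum_sq_eq_diag hi i ▸ single_le_sum (f := fun j => P i j ^ 2)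
      (fun j _ => sq_nonneg _) (mem_univ i)
  nlinarith [hs.diag_nonneg hi i]

end Matrix

lemma exists_orthonormal_rows_mulVec_eq_zero {ι : Type*} [Fintype ι]
    (Q : Submodule ℝ (ι → ℝ)) :
    ∃ (r : ℕ) (B : Matrix (Fin r) ι ℝ), B * Bᵀ = 1 ∧ (∀ z ∈ Q, B *ᵥ z = 0) ∧
      r + finrank ℝ Q = Fintype.card ι := by
  classical
  let e : EuclideanSpace ℝ ι ≃ₗ[ℝ] (ι → ℝ) := WithLp.linearEquiv 2 ℝ (ι → ℝ)
  let Q' := Q.map e.symm.toLinearMap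
  let b := stdOrthonormalBasis ℝ Q'ᗮ
  refine ⟨_, Matrix.of fun t i => (b t : EuclideanSpace ℝ ι) i, ?_, ?_, ?_⟩
  · ext t u
    have h := orthonormal_iff_ite.1 b.orthonormal u t
    rw [Submodule.coe_inner, EuclideanSpace.inner_eq_star_dotProduct] at h
    rw [Matrix.mul_apply, Matrix.one_apply]
    convert h using 1
    · simp [dotProduct]
    · simp [eq_comm]
  · intro z hz
    ext t
    have h := Submodule.inner_right_of_mem_orthogonal
      (Submodule.mem_map_of_mem hz (f := e.symm.toLinearMap)) (b t).2
    rw [EuclideanSpace.inner_eq_star_dotProduct] at h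
    rw [Matrix.mulVec, Pi.zero_apply, ← h]
    simp [e]
  · rw [add_comm, ← LinearEquiv.finrank_map_eq e.symm Q, Submodule.finrank_add_finrank_orthogonal,
      finrank_euclideanSpace]

lemma exists_isSymm_isIdempotentElem_trace {ι : Type*} [Fintype ι] [DecidableEq ι]
    (Q : Submodule ℝ (ι → ℝ)) :
    ∃ P : Matrix ι ι ℝ, P.IsSymm ∧ IsIdempotentElem P ∧
      P.trace = Fintype.card ι - finrank ℝ Q ∧ ∀ z ∈ Q, ∀ v, z ⬝ᵥ P *ᵥ v = 0 := by
  obtain ⟨r, B, hB, hBQ, hr⟩ := exists_orthonormal_rows_mulVec_eq_zero Q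
  refine ⟨Bᵀ * B, by rw [IsSymm, transpose_mul, transpose_transpose], ?_, ?_, fun z hz v => ?_⟩
  · rw [IsIdempotentElem, Matrix.mul_assoc, ← Matrix.mul_assoc B, hB, Matrix.one_mul]
  · rw [Matrix.trace_mul_comm, hB, Matrix.trace_one, Fintype.card_fin, ← hr]
    push_cast; ring
  · rw [← Matrix.mulVec_mulVec, Matrix.dotProduct_mulVec, Matrix.vecMul_transpose, hBQ z hz,
      zero_dotProduct]

section SignedProjection

variable {ι : Type*} [Fintype ι] [DecidableEq ι]

lemma two_pow_mul_sum_diag_le_sum_sum_abs (A : Matrix ι ι ℝ) (y w : ι → ℝ) :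
    2 ^ Fintype.card ι * ∑ i, A i i * (y i * w i)
      ≤ ∑ ε : ι → Bool, ∑ i, |y i * (A *ᵥ fun j => boolSign (ε j) * w j) i| :=
  calc 2 ^ Fintype.card ι * ∑ i, A i i * (y i * w i)
      = ∑ i, y i * ∑ ε : ι → Bool, boolSign (ε i) * ∑ j, A i j * w j * boolSign (ε j) := by
        simp_rw [sum_boolSign_mul_sum, mul_sum]
        exact sum_congr rfl fun i _ => by ring
    _ = ∑ ε : ι → Bool, ∑ i, boolSign (ε i) * (y i * (A *ᵥ fun j => boolSign (ε j) * w j) i) := by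
        rw [sum_comm]
        refine sum_congr rfl fun i _ => ?_
        rw [mul_sum]
        refine sum_congr rfl fun ε _ => ?_
        rw [mulVec_boolSign_mul_apply]
        ring
    _ ≤ ∑ ε : ι → Bool, ∑ i, |y i * (A *ᵥ fun j => boolSign (ε j) * w j) i| := by
        gcongr with ε _ i
        exact (le_abs_self _).trans_eq (by rw [abs_mul, abs_boolSign, one_mul])

lemma sum_sum_abs_mulVec_rpow_le {P : Matrix ι ι ℝ} (hs : P.IsSymm) (hi : IsIdempotentElem P)
    {p : ℝ} (hp : 2 ≤ p) {w : ι → ℝ} (hw : ∀ j, 0 ≤ w j) :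
    ∑ ε : ι → Bool, ∑ i, |(P *ᵥ fun j => boolSign (ε j) * w j) i| ^ p
      ≤ khintchineConst p * 2 ^ Fintype.card ι * ∑ j, P j j * w j ^ p := by
  have hrow : ∀ i, (∑ j, (P i j * w j) ^ 2) ^ (p / 2) ≤ ∑ j, P i j ^ 2 * w j ^ p := fun i =>
    calc (∑ j, (P i j * w j) ^ 2) ^ (p / 2) = (∑ j, P i j ^ 2 * w j ^ 2) ^ (p / 2) := by
          simp_rw [mul_pow]
      _ ≤ ∑ j, P i j ^ 2 * (w j ^ 2) ^ (p / 2) :=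
          rpow_sum_mul_le_sum_mul_rpow _ (fun _ => sq_nonneg _)
            ((hs.sum_sq_eq_diag hi i).trans_le (hs.diag_le_one hi i)) (fun _ => sq_nonneg _)
            (by linarith)
      _ = ∑ j, P i j ^ 2 * w j ^ p := by
          simp_rw [← rpow_natCast, ← rpow_mul (hw _)]
          norm_num [mul_div_cancel₀]
  rw [sum_comm]
  calc ∑ i, ∑ ε : ι → Bool, |(P *ᵥ fun j => boolSign (ε j) * w j) i| ^ p
      ≤ ∑ i, khintchineConst p * 2 ^ Fintype.card ι * (∑ j, (P i j * w j) ^ 2) ^ (p / 2) := by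
        gcongr with i
        simp_rw [mulVec_boolSign_mul_apply]
        exact sum_abs_sum_boolSign_rpow_le (by linarith) _
    _ ≤ ∑ i, khintchineConst p * 2 ^ Fintype.card ι * ∑ j, P i j ^ 2 * w j ^ p := by
        have := khintchineConst_pos p
        gcongr with i
        exact hrow i
    _ = khintchineConst p * 2 ^ Fintype.card ι * ∑ j, P j j * w j ^ p := by
        rw [← mul_sum, sum_comm]
        refine congrArg _ (sum_congr rfl fun j _ => ?_)
        rw [← sum_mul]
        simp_rw [hs.apply j]
        rw [hs.sum_sq_eq_diag hi j]

lemma exists_boolSign_half_le_sum_abs_mul_sub {P : Matrix ι ι ℝ} (hs : P.IsSymm)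
    (hi : IsIdempotentElem P) {p : ℝ} (hp : 2 ≤ p) {y w : ι → ℝ} (hw : ∀ j, 0 ≤ w j)
    (hyw : ∀ j, |y j| * w j = w j ^ p) :
    ∃ ε : ι → Bool, (∑ i, P i i * w i ^ p) / 2
      ≤ ∑ i, |y i * (P *ᵥ fun j => boolSign (ε j) * w j) i|
        - (2 * khintchineConst p)⁻¹ * ∑ i, |(P *ᵥ fun j => boolSign (ε j) * w j) i| ^ p := by
  have hnum := two_pow_mul_sum_diag_le_sum_sum_abs P (fun i => |y i|) w
  simp only [hyw, abs_mul, abs_abs] at hnum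
  have hK := khintchineConst_pos p
  have hden := (mul_le_mul_of_nonneg_left (sum_sum_abs_mulVec_rpow_le hs hi hp hw)
    (inv_nonneg.2 (by positivity : 0 ≤ 2 * khintchineConst p))).trans_eq
    (by field_simp : _ = 2 ^ Fintype.card ι * (∑ j, P j j * w j ^ p) / 2)
  refine (exists_le_of_sum_le univ_nonempty ?_).imp fun ε h => h.2
  simp only [sum_const, Finset.card_univ, Fintype.card_fun, Fintype.card_bool, nsmul_eq_mul,
    sum_sub_distrib, ← mul_sum, abs_mul]
  push_cast
  linarith

end SignedProjection

lemma lqN_nonneg {N : ℕ} (q : ℝ) (x : Fin N → ℝ) : 0 ≤ lqN q x :=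
  rpow_nonneg (sum_nonneg fun _ _ => rpow_nonneg (abs_nonneg _) q) _

lemma distq_nonneg {N : ℕ} (q : ℝ) (x : Fin N → ℝ) (Q : Submodule ℝ (Fin N → ℝ)) :
    0 ≤ distq q x Q :=
  Real.iInf_nonneg fun _ => lqN_nonneg q _

lemma distq_le_lqN {N : ℕ} (q : ℝ) (x : Fin N → ℝ) (Q : Submodule ℝ (Fin N → ℝ)) :
    distq q x Q ≤ lqN q x := by
  refine (ciInf_le ⟨0, ?_⟩ (0 : Q)).trans_eq (by simp)
  rintro _ ⟨y, rfl⟩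
  exact lqN_nonneg q _

lemma dotProduct_le_distq_mul_lqN {N : ℕ} {p q : ℝ} (hpq : q.HolderConjugate p)
    (Q : Submodule ℝ (Fin N → ℝ)) {u f : Fin N → ℝ} (hf : ∀ z ∈ Q, z ⬝ᵥ f = 0) :
    u ⬝ᵥ f ≤ distq q u Q * lqN p f := by
  have hQ : ∀ y : Q, u ⬝ᵥ f ≤ lqN q (fun i => u i - (y : Fin N → ℝ) i) * lqN p f := fun y =>
    calc u ⬝ᵥ f = (u - (y : Fin N → ℝ)) ⬝ᵥ f := by rw [sub_dotProduct, hf y y.2, sub_zero]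
      _ ≤ _ := inner_le_Lp_mul_Lq univ _ f hpq
  rcases (lqN_nonneg p f).eq_or_lt with h0 | hpos
  · simpa [← h0] using hQ 0
  · rw [← div_le_iff₀ hpos]
    exact le_ciInf fun y => (div_le_iff₀ hpos).2 (hQ y)

lemma rpow_mul_rpow_le_of_le_sub_mul {p q a M D c d : ℝ} (hpq : p.HolderConjugate q)
    (ha : 0 ≤ a) (hc : 0 < c) (hD : 0 ≤ D) (hd : 0 ≤ d) (h₁ : a ≤ M - c * D)
    (h₂ : M ≤ d * D ^ (1 / p)) :
    c ^ (1 / p) * a ^ (1 / q) ≤ d := by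
  have hcD : 0 ≤ c * D := mul_nonneg hc.le hD
  have hM : 0 ≤ M := by linarith
  have hp := hpq.pos
  have hq := hpq.symm.pos
  have key : c ^ (1 / p) * a ^ (1 / q) * D ^ (1 / p) ≤ M :=
    calc c ^ (1 / p) * a ^ (1 / q) * D ^ (1 / p) = (c * D) ^ (1 / p) * a ^ (1 / q) := by
          rw [mul_rpow hc.le hD]; ring
      _ ≤ M ^ (1 / p) * M ^ (1 / q) := by gcongr <;> linarith
      _ = M := by
          rw [← rpow_add' hM (by simp [hpq.inv_add_inv_eq_one]), one_div, one_div,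
            hpq.inv_add_inv_eq_one, rpow_one]
  rcases (rpow_nonneg hD (1 / p)).eq_or_lt with h0 | hpos
  · have ha0 : a = 0 := by rw [← h0, mul_zero] at h₂; linarith
    rw [ha0, zero_rpow (by positivity), mul_zero]
    exact hd
  · exact le_of_mul_le_mul_right (key.trans h₂) hpos

open Fin.NatCast in
lemma add_mem_of_forall_add_one_mem {N : ℕ} [NeZero N] {K : Set (Fin N → ℝ)}
    (hK : ∀ x ∈ K, (fun i => x (i + 1)) ∈ K) {x : Fin N → ℝ} (hx : x ∈ K) (s : Fin N) :
    (fun i => x (i + s)) ∈ K := by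
  suffices h : ∀ k : ℕ, (fun i => x (i + k)) ∈ K by simpa using h s
  intro k
  induction k with
  | zero => simpa using hx
  | succ k ih => simpa [add_assoc, add_comm (1 : Fin N)] using hK _ ih

lemma exists_sum_mul_sum_le_mul_sum_mul_add {N : ℕ} [NeZero N] (d a : Fin N → ℝ) :
    ∃ s, (∑ i, d i) * ∑ i, a i ≤ N * ∑ i, d i * a (i + s) := by
  refine (exists_le_of_sum_le univ_nonempty (le_of_eq ?_)).imp fun s h => h.2
  rw [sum_const, Finset.card_univ, Fintype.card_fin, nsmul_eq_mul, ← mul_sum, sum_comm]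
  have hshift : ∀ i, ∑ s, a (i + s) = ∑ s, a s := fun i => Equiv.sum_comp (Equiv.addLeft i) a
  simp_rw [← mul_sum, hshift, sum_mul]

lemma exists_sign_mul_eq_abs {ι : Type*} (a : ι → ℝ) :
    ∃ σ : ι → ℝ, (∀ i, σ i = 1 ∨ σ i = -1) ∧ ∀ i, σ i * a i = |a i| := by
  refine ⟨fun i => if 0 ≤ a i then 1 else -1, fun i => ?_, fun i => ?_⟩ <;> beta_reduce
  · split_ifs <;> simp
  split_ifs with h
  · rw [one_mul, abs_of_nonneg h]
  · rw [abs_of_neg (not_le.1 h), neg_one_mul]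

lemma mul_iSup_le_iSup_of_forall_exists {α : Type*} {f g : α → ℝ} {C : ℝ} (hC : 0 ≤ C)
    (hf : ∀ a, 0 ≤ f a) (hfg : ∀ a, f a ≤ g a) (h : ∀ a, ∃ b, C * g a ≤ f b) :
    C * ⨆ a, g a ≤ ⨆ a, f a := by
  by_cases hbdd : BddAbove (Set.range f)
  · rw [Real.mul_iSup_of_nonneg hC]
    refine Real.iSup_le (fun a => ?_) (Real.iSup_nonneg hf)
    obtain ⟨b, hb⟩ := h a
    exact hb.trans (le_ciSup hbdd b)
  · have hg : ¬BddAbove (Set.range g) := fun ⟨M, hM⟩ =>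
      hbdd ⟨M, by rintro _ ⟨a, rfl⟩; exact (hfg a).trans (hM ⟨a, rfl⟩)⟩
    rw [Real.iSup_of_not_bddAbove hbdd, Real.iSup_of_not_bddAbove hg, mul_zero]

noncomputable def widthConst (q : ℝ) : ℝ :=
  (2 * khintchineConst q.conjExponent)⁻¹ ^ (1 / q.conjExponent) * (1 / 2) ^ (1 / q)

lemma widthConst_pos (q : ℝ) : 0 < widthConst q := by
  have := khintchineConst_pos q.conjExponent
  unfold widthConst
  positivity

theorem exists_sign_mul_le_distq {q : ℝ} (hq1 : 1 < q) (hq2 : q ≤ 2) {N : ℕ}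
    {P : Matrix (Fin N) (Fin N) ℝ} (hPs : P.IsSymm) (hPi : IsIdempotentElem P)
    {Q : Submodule ℝ (Fin N → ℝ)} (hPQ : ∀ z ∈ Q, ∀ v, z ⬝ᵥ P *ᵥ v = 0) (y : Fin N → ℝ) :
    ∃ σ : Fin N → ℝ, (∀ i, σ i = 1 ∨ σ i = -1) ∧
      (2 * khintchineConst q.conjExponent)⁻¹ ^ (1 / q.conjExponent)
          * ((∑ i, P i i * |y i| ^ q) / 2) ^ (1 / q)
        ≤ distq q (fun i => σ i * y i) Q := by
  set p := q.conjExponent with hp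
  have hpq : q.HolderConjugate p := .conjExponent hq1
  have hp2 : 2 ≤ p := by
    rw [hp, Real.conjExponent, le_div_iff₀ (by linarith)]
    linarith
  set w := fun j => |y j| ^ (q - 1)
  have hw : ∀ j, 0 ≤ w j := fun j => rpow_nonneg (abs_nonneg _) _
  have hwp : ∀ j, w j ^ p = |y j| ^ q := fun j => by
    rw [← rpow_mul (abs_nonneg _), hpq.sub_one_mul_conj]
  have hyw : ∀ j, |y j| * w j = w j ^ p := fun j => by
    rw [hwp, mul_comm, ← rpow_add_one' (abs_nonneg _) (by linarith), sub_add_cancel]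
  obtain ⟨ε, hε⟩ := exists_boolSign_half_le_sum_abs_mul_sub hPs hPi hp2 hw hyw
  set f := P *ᵥ fun j => boolSign (ε j) * w j
  obtain ⟨σ, hσ, hσf⟩ := exists_sign_mul_eq_abs fun i => y i * f i
  have hdual : ∑ i, |y i * f i| ≤ distq q (fun i => σ i * y i) Q * lqN p f := by
    refine le_of_eq_of_le (sum_congr rfl fun i _ => ?_)
      (dotProduct_le_distq_mul_lqN hpq Q fun z hz => hPQ z hz _)
    rw [← hσf, mul_assoc]
  refine ⟨σ, hσ, ?_⟩
  simp_rw [← hwp]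
  exact rpow_mul_rpow_le_of_le_sub_mul hpq.symm
    (div_nonneg (sum_nonneg fun i _ => mul_nonneg (hPs.diag_nonneg hPi i) (rpow_nonneg (hw i) p))
      zero_le_two)
    (inv_pos.2 (mul_pos two_pos (khintchineConst_pos p)))
    (sum_nonneg fun i _ => rpow_nonneg (abs_nonneg (f i)) p) (distq_nonneg _ _ _) hε hdual

theorem exists_mem_widthConst_mul_le_distq {q : ℝ} (hq1 : 1 < q) (hq2 : q ≤ 2) {N : ℕ}
    [NeZero N] {K : Set (Fin N → ℝ)}
    (hsign : ∀ x ∈ K, ∀ ε : Fin N → ℝ, (∀ i, ε i = 1 ∨ ε i = -1) → (fun i => ε i * x i) ∈ K)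
    (hshift : ∀ x ∈ K, (fun i => x (i + 1)) ∈ K) {x : Fin N → ℝ} (hx : x ∈ K)
    (Q : Submodule ℝ (Fin N → ℝ)) :
    ∃ u ∈ K, widthConst q * (1 - finrank ℝ Q / N : ℝ) ^ (1 / q) * lqN q x ≤ distq q u Q := by
  obtain ⟨P, hPs, hPi, htr, hPQ⟩ := exists_isSymm_isIdempotentElem_trace Q
  obtain ⟨s, hs⟩ := exists_sum_mul_sum_le_mul_sum_mul_add (fun i => P i i) fun i => |x i| ^ q
  obtain ⟨σ, hσ, hdist⟩ := exists_sign_mul_le_distq hq1 hq2 hPs hPi hPQ fun i => x (i + s)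
  refine ⟨_, hsign _ (add_mem_of_forall_add_one_mem hshift hx s) σ hσ, le_trans ?_ hdist⟩
  have hN : (0 : ℝ) < N := Nat.cast_pos.2 (NeZero.pos N)
  have hT : 0 ≤ (∑ i, P i i) / N := div_nonneg (sum_nonneg fun i _ => hPs.diag_nonneg hPi i) hN.le
  have hA : 0 ≤ ∑ i, |x i| ^ q := sum_nonneg fun i _ => rpow_nonneg (abs_nonneg _) q
  have hcorank : (1 - finrank ℝ Q / N : ℝ) = (∑ i, P i i) / N := by
    rw [show ∑ i, P i i = P.trace from rfl, htr, Fintype.card_fin]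
    field_simp
  rw [hcorank]
  calc widthConst q * ((∑ i, P i i) / N) ^ (1 / q) * lqN q x
      = (2 * khintchineConst q.conjExponent)⁻¹ ^ (1 / q.conjExponent)
          * ((∑ i, P i i) / N * (∑ i, |x i| ^ q) / 2) ^ (1 / q) := by
        rw [widthConst, lqN, div_rpow (mul_nonneg hT hA) zero_le_two, mul_rpow hT hA,
          div_rpow zero_le_one zero_le_two, one_rpow]
        ring
    _ ≤ _ := by
        have := khintchineConst_pos q.conjExponent
        gcongr
        rw [div_mul_eq_mul_div, div_le_iff₀ hN, mul_comm _ (N : ℝ)]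
        exact hs

/-- If `K ⊆ ℝ^N` is unconditional and invariant under cyclic shifts of coordinates and
`1 < q ≤ 2`, then `d_n(K, ℓ_q^N) ≥ c_q (1 - n/N)^{1/q} sup_{x ∈ K} ‖x‖_q` where
`c_q > 0` depends only on `q`. -/
theorem stmt14 (q : ℝ) (hq1 : 1 < q) (hq2 : q ≤ 2) :
    ∃ c > 0, ∀ (N : ℕ) (_ : NeZero N) (K : Set (Fin N → ℝ)),
      (∀ x ∈ K, ∀ ε : Fin N → ℝ, (∀ i, ε i = 1 ∨ ε i = -1) →
        (fun i => ε i * x i) ∈ K) →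
      (∀ x ∈ K, (fun i => x (i + 1)) ∈ K) →
      ∀ n, n < N →
      dKol n q K ≥ c * (1 - (n : ℝ) / N) ^ (1/q) * ⨆ x : K, lqN q x.1 := by
  refine ⟨widthConst q, widthConst_pos q, fun N _ K hsign hshift n hn => ?_⟩
  have hN : (0 : ℝ) < N := Nat.cast_pos.2 (NeZero.pos N)
  have hnN : 0 ≤ 1 - (n : ℝ) / N := by
    rw [sub_nonneg, div_le_one hN]
    exact_mod_cast hn.le
  have : Nonempty {Q : Submodule ℝ (Fin N → ℝ) // finrank ℝ Q ≤ n} := ⟨⟨⊥, by simp⟩⟩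
  refine le_ciInf fun Q => mul_iSup_le_iSup_of_forall_exists
    (mul_nonneg (widthConst_pos q).le (rpow_nonneg hnN _)) (fun u => distq_nonneg _ _ _)
    (fun u => distq_le_lqN _ _ _) fun x => ?_
  obtain ⟨u, hu, hxu⟩ := exists_mem_widthConst_mul_le_distq hq1 hq2 hsign hshift x.2 Q.1
  refine ⟨⟨u, hu⟩, le_trans ?_ hxu⟩
  have := widthConst_pos q
  have := lqN_nonneg q x.1
  gcongr
  exact_mod_cast Q.2
end

section
/- Let H ≤ S_N act transitively on {1,…,N}, and let K ⊆ ℝ^N be unconditional and invariant under the permutation action of H on coordinates. Then for 1 < q ≤ 2 and any ε ∈ (0,1), d_n(K, ℓ_q^N) ≥ c(q,ε) sup_{x∈K} ‖x‖_q whenever n ≤ N(1 − ε). -/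
open MeasureTheory

/-!
Fix `x ∈ K` and `Q` with `dim Q ≤ n`, and let `P` be the matrix of the orthogonal projection
onto `Qᗮ`. Its trace is at least `N - n ≥ εN`, so averaging over the transitive group `H` gives
`π ∈ H` with `∑ P i i |x (π i)|^q ≥ ε ‖x‖_q^q`. With `w = |x ∘ π|` and the dual exponent
`r = q / (q - 1) ≥ 2`, test the points `g ⊙ w ∈ K` (random signs `g`) against the functionals
`P (g ⊙ w^(q-1))`, which vanish on `Q`. On average the pairing is `∑ P i i w_i^q`, while
Khintchine's inequality together with `∑ j, P i j ^ 2 = P i i ≤ 1` bounds the average of their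
`ℓ_r^r` norms by `2 r^(r/2) ‖x‖_q^q`. Hölder's inequality over the signs then produces one `g`
with `dist_q(g ⊙ w, Q) ≥ ε (2 r^(r/2))^(-1/r) ‖x‖_q`.
-/

namespace KolmogorovWidth

open Finset Matrix

variable {N : ℕ}

lemma lqN_nonneg (q : ℝ) (x : Fin N → ℝ) : 0 ≤ lqN q x := by
  unfold lqN
  positivity

lemma bddBelow_range_lqN_sub (q : ℝ) (x : Fin N → ℝ) (Q : Submodule ℝ (Fin N → ℝ)) :
    BddBelow (Set.range fun y : Q => lqN q (fun i => x i - (y : Fin N → ℝ) i)) :=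
  ⟨0, by rintro _ ⟨y, rfl⟩; exact lqN_nonneg q _⟩

lemma distq_nonneg (q : ℝ) (x : Fin N → ℝ) (Q : Submodule ℝ (Fin N → ℝ)) :
    0 ≤ distq q x Q :=
  le_ciInf fun _ => lqN_nonneg q _

lemma distq_le_lqN (q : ℝ) (x : Fin N → ℝ) (Q : Submodule ℝ (Fin N → ℝ)) :
    distq q x Q ≤ lqN q x := by
  simpa [distq] using ciInf_le (bddBelow_range_lqN_sub q x Q) 0

lemma sum_mul_le_distq {q r : ℝ} (hrq : r.HolderConjugate q) {Q : Submodule ℝ (Fin N → ℝ)}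
    {f : Fin N → ℝ} (hf : ∀ z ∈ Q, ∑ i, f i * z i = 0) (y : Fin N → ℝ) :
    ∑ i, f i * y i ≤ (∑ i, |f i| ^ r) ^ (1 / r) * distq q y Q := by
  have hr : 0 ≤ (∑ i, |f i| ^ r) ^ (1 / r) := by positivity
  rw [distq, Real.mul_iInf_of_nonneg hr]
  refine le_ciInf fun z => ?_
  calc ∑ i, f i * y i = ∑ i, f i * (y i - (z : Fin N → ℝ) i) := by
        simp only [mul_sub, sum_sub_distrib, hf z z.2, sub_zero]
    _ ≤ _ := Real.inner_le_Lp_mul_Lq _ _ _ hrq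

lemma rpow_le_rpow_mul_exp_sub {u r : ℝ} (hu : 0 ≤ u) (hr : 0 < r) :
    u ^ r ≤ r ^ r * Real.exp (u - r) := by
  have h : (u / r) ^ r ≤ Real.exp (u - r) := by
    calc (u / r) ^ r ≤ Real.exp (u / r - 1) ^ r := by
          gcongr
          linarith [Real.add_one_le_exp (u / r - 1)]
      _ = Real.exp (u - r) := by
          rw [← Real.exp_mul]
          congr 1
          field_simp
  rwa [Real.div_rpow hu hr.le, div_le_iff₀' (by positivity)] at h

lemma rpow_mul_abs_rpow_le {l r : ℝ} (hl : 0 < l) (hr : 0 < r) (t : ℝ) :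
    l ^ r * |t| ^ r ≤ r ^ r * Real.exp (-r) * (Real.exp (l * t) + Real.exp (-l * t)) := by
  have hexp : Real.exp (l * |t|) ≤ Real.exp (l * t) + Real.exp (-l * t) := by
    rcases abs_cases t with ⟨h, _⟩ | ⟨h, _⟩
    · rw [h]; linarith [Real.exp_pos (-l * t)]
    · rw [h, mul_neg, ← neg_mul]; linarith [Real.exp_pos (l * t)]
  calc l ^ r * |t| ^ r = (l * |t|) ^ r := (Real.mul_rpow hl.le (abs_nonneg _)).symm
    _ ≤ r ^ r * Real.exp (l * |t| - r) := rpow_le_rpow_mul_exp_sub (by positivity) hr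
    _ ≤ r ^ r * Real.exp (-r) * (Real.exp (l * t) + Real.exp (-l * t)) := by
      rw [sub_eq_add_neg, Real.exp_add, mul_comm (Real.exp _), ← mul_assoc]
      gcongr

section Rademacher

def rademacher (b : Bool) : ℝ := if b then 1 else -1

lemma rademacher_mul_self (b : Bool) : rademacher b * rademacher b = 1 := by
  cases b <;> simp [rademacher]

lemma rademacher_not (b : Bool) : rademacher (!b) = -rademacher b := by
  cases b <;> simp [rademacher]

lemma rademacher_eq_one_or_eq_neg_one (b : Bool) : rademacher b = 1 ∨ rademacher b = -1 := by
  cases b <;> simp [rademacher]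

variable {ι : Type*} [Fintype ι] [DecidableEq ι]

lemma sum_rademacher_mul_rademacher (j k : ι) :
    ∑ g : ι → Bool, rademacher (g j) * rademacher (g k) =
      if j = k then 2 ^ Fintype.card ι else 0 := by
  split_ifs with hjk
  · simp [hjk, rademacher_mul_self]
  · refine sum_ninvolution (fun g => Function.update g j (!g j)) (fun g => ?_)
      (fun g _ h => ?_) (fun g => mem_univ _) (fun g => ?_)
    · rw [Function.update_self, Function.update_of_ne (Ne.symm hjk), rademacher_not]
      ring
    · simpa using congrFun h j
    · simp

lemma sum_sum_mul_rademacher_mul_rademacher (c : ι → ι → ℝ) :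
    ∑ g : ι → Bool, ∑ i, ∑ j, c i j * (rademacher (g i) * rademacher (g j)) =
      2 ^ Fintype.card ι * ∑ i, c i i := by
  rw [sum_comm]
  simp_rw [sum_comm (s := (univ : Finset (ι → Bool))), ← mul_sum,
    sum_rademacher_mul_rademacher, mul_ite, mul_zero, sum_ite_eq, mem_univ,
    if_true, mul_sum, mul_comm]

lemma sum_exp_mul_sum_rademacher_le (a : ι → ℝ) (t : ℝ) :
    ∑ g : ι → Bool, Real.exp (t * ∑ j, a j * rademacher (g j)) ≤
      2 ^ Fintype.card ι * Real.exp (t ^ 2 * (∑ j, a j ^ 2) / 2) := by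
  calc ∑ g : ι → Bool, Real.exp (t * ∑ j, a j * rademacher (g j))
      = ∏ j, ∑ b : Bool, Real.exp (t * (a j * rademacher b)) := by
        rw [Fintype.prod_sum]
        simp_rw [mul_sum, Real.exp_sum]
    _ = ∏ j, 2 * Real.cosh (t * a j) := by
        simp [rademacher, Real.cosh_eq, mul_div_cancel₀]
    _ ≤ ∏ j, 2 * Real.exp ((t * a j) ^ 2 / 2) := by
        gcongr with j
        exact Real.cosh_le_exp_half_sq _
    _ = 2 ^ Fintype.card ι * Real.exp (t ^ 2 * (∑ j, a j ^ 2) / 2) := by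
        rw [prod_mul_distrib, prod_const, ← Real.exp_sum, mul_sum,
          card_univ, ← sum_div]
        simp_rw [mul_pow]

theorem sum_abs_sum_mul_rademacher_rpow_le (a : ι → ℝ) {r : ℝ} (hr : 0 < r) :
    ∑ g : ι → Bool, |∑ j, a j * rademacher (g j)| ^ r ≤
      2 ^ Fintype.card ι * (2 * r ^ (r / 2)) * (∑ j, a j ^ 2) ^ (r / 2) := by
  set S := ∑ j, a j ^ 2 with hS_def
  set X : (ι → Bool) → ℝ := fun g => ∑ j, a j * rademacher (g j)
  have hS0 : 0 ≤ S := by positivity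
  rcases hS0.eq_or_lt with hS | hS
  · have ha : ∀ j, a j = 0 := fun j => by
      simpa using (sum_eq_zero_iff_of_nonneg fun i _ => sq_nonneg (a i)).1 hS.symm j
    simp [ha, Real.zero_rpow hr.ne']
    positivity
  -- the optimal Chernoff parameter, up to constants
  obtain ⟨l, hl, hlS⟩ : ∃ l : ℝ, 0 < l ∧ l ^ 2 * S = r :=
    ⟨√(r / S), Real.sqrt_pos.2 (div_pos hr hS), by
      rw [Real.sq_sqrt (div_pos hr hS).le]; field_simp⟩
  have hmgf : ∀ t, t ^ 2 = l ^ 2 →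
      ∑ g, Real.exp (t * X g) ≤ 2 ^ Fintype.card ι * Real.exp (r / 2) := by
    intro t ht
    have h := sum_exp_mul_sum_rademacher_le a t
    rwa [← hS_def, ht, hlS] at h
  have hsum : l ^ r * ∑ g, |X g| ^ r ≤
      l ^ r * (2 ^ Fintype.card ι * (2 * r ^ (r / 2)) * S ^ (r / 2)) := by
    calc l ^ r * ∑ g, |X g| ^ r
        ≤ r ^ r * Real.exp (-r) * (∑ g, Real.exp (l * X g) + ∑ g, Real.exp (-l * X g)) := by
          rw [mul_sum, ← sum_add_distrib, mul_sum]
          exact sum_le_sum fun g _ => rpow_mul_abs_rpow_le hl hr (X g)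
      _ ≤ r ^ r * Real.exp (-r) *
          (2 ^ Fintype.card ι * Real.exp (r / 2) + 2 ^ Fintype.card ι * Real.exp (r / 2)) := by
          gcongr
          · exact hmgf l rfl
          · exact hmgf (-l) (neg_sq l)
      _ = 2 ^ Fintype.card ι * (2 * r ^ r) * (Real.exp (-r) * Real.exp (r / 2)) := by ring
      _ ≤ 2 ^ Fintype.card ι * (2 * r ^ r) := by
          refine mul_le_of_le_one_right (by positivity) ?_
          rw [← Real.exp_add, Real.exp_le_one_iff]
          linarith
      _ = l ^ r * (2 ^ Fintype.card ι * (2 * r ^ (r / 2)) * S ^ (r / 2)) := by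
          have : l ^ r * S ^ (r / 2) = r ^ (r / 2) := by
            calc l ^ r * S ^ (r / 2) = (l ^ 2) ^ (r / 2) * S ^ (r / 2) := by
                  rw [← Real.rpow_natCast_mul hl.le, Nat.cast_ofNat, mul_div_cancel₀ r two_ne_zero]
              _ = r ^ (r / 2) := by rw [← Real.mul_rpow (by positivity) hS0, hlS]
          have hrr : r ^ r = r ^ (r / 2) * r ^ (r / 2) := by
            rw [← Real.rpow_add hr]; ring_nf
          rw [hrr, ← this]
          ring
  exact le_of_mul_le_mul_left hsum (by positivity)

end Rademacher

section ProjectionMatrix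

variable {ι : Type*} [Fintype ι] {P : Matrix ι ι ℝ}

lemma diag_eq_sum_sq (hsymm : P.IsSymm) (hidem : IsIdempotentElem P) (i : ι) :
    P i i = ∑ j, P i j ^ 2 := by
  conv_lhs => rw [← hidem.eq]
  simp only [Matrix.mul_apply, sq, hsymm.apply i]

lemma sum_sq_eq_diag (hsymm : P.IsSymm) (hidem : IsIdempotentElem P) (j : ι) :
    ∑ i, P i j ^ 2 = P j j := by
  simp only [← hsymm.apply j, diag_eq_sum_sq hsymm hidem j]

lemma diag_nonneg (hsymm : P.IsSymm) (hidem : IsIdempotentElem P) (i : ι) : 0 ≤ P i i := by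
  rw [diag_eq_sum_sq hsymm hidem]
  positivity

lemma diag_le_one (hsymm : P.IsSymm) (hidem : IsIdempotentElem P) (i : ι) : P i i ≤ 1 := by
  have h : P i i ^ 2 ≤ P i i := by
    conv_rhs => rw [diag_eq_sum_sq hsymm hidem]
    exact single_le_sum (f := fun j => P i j ^ 2) (fun j _ => sq_nonneg _) (mem_univ i)
  nlinarith [diag_nonneg hsymm hidem i]

/-- Row `i` of `P` has squared norm `P i i ≤ 1`, so Jensen applies row by row. -/
lemma sum_rpow_sum_sq_mul_le (hsymm : P.IsSymm) (hidem : IsIdempotentElem P) {r : ℝ}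
    (hr : 2 ≤ r) {d : ι → ℝ} (hd : ∀ j, 0 ≤ d j) :
    ∑ i, (∑ j, (P i j * d j) ^ 2) ^ (r / 2) ≤ ∑ j, d j ^ r := by
  have hp : 1 ≤ r / 2 := by linarith
  have hdr : ∀ j, (d j ^ 2) ^ (r / 2) = d j ^ r := fun j => by
    rw [← Real.rpow_natCast_mul (hd j), Nat.cast_ofNat, mul_div_cancel₀ r two_ne_zero]
  have hrow : ∀ i, (∑ j, (P i j * d j) ^ 2) ^ (r / 2) ≤ ∑ j, P i j ^ 2 * d j ^ r := by
    intro i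
    have h := Real.inner_le_weight_mul_Lp_of_nonneg univ hp (fun j => P i j ^ 2)
      (fun j => d j ^ 2) (fun j => sq_nonneg _) (fun j => sq_nonneg _)
    rw [← diag_eq_sum_sq hsymm hidem] at h
    have hw : P i i ^ (1 - (r / 2)⁻¹) ≤ 1 :=
      Real.rpow_le_one (diag_nonneg hsymm hidem i) (diag_le_one hsymm hidem i)
        (by rw [sub_nonneg]; exact inv_le_one_of_one_le₀ hp)
    have hR : 0 ≤ ∑ j, P i j ^ 2 * (d j ^ 2) ^ (r / 2) := by positivity
    calc (∑ j, (P i j * d j) ^ 2) ^ (r / 2)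
        ≤ ((∑ j, P i j ^ 2 * (d j ^ 2) ^ (r / 2)) ^ (r / 2)⁻¹) ^ (r / 2) := by
          gcongr
          simp_rw [mul_pow]
          exact h.trans (mul_le_of_le_one_left (by positivity) hw)
      _ = ∑ j, P i j ^ 2 * d j ^ r := by
          rw [← Real.rpow_mul hR, inv_mul_cancel₀ (by positivity), Real.rpow_one]
          simp_rw [hdr]
  calc ∑ i, (∑ j, (P i j * d j) ^ 2) ^ (r / 2) ≤ ∑ i, ∑ j, P i j ^ 2 * d j ^ r :=
        sum_le_sum fun i _ => hrow i
    _ = ∑ j, P j j * d j ^ r := by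
        rw [sum_comm]
        simp_rw [← sum_mul, sum_sq_eq_diag hsymm hidem]
    _ ≤ ∑ j, d j ^ r := sum_le_sum fun j _ =>
        mul_le_of_le_one_left (Real.rpow_nonneg (hd j) r) (diag_le_one hsymm hidem j)

end ProjectionMatrix

lemma exists_orthonormal_rows_mulVec_eq_zero (Q : Submodule ℝ (Fin N → ℝ)) :
    ∃ (m : ℕ) (V : Matrix (Fin m) (Fin N) ℝ), V * V.transpose = 1 ∧
      (∀ z ∈ Q, V *ᵥ z = 0) ∧ N = m + Module.finrank ℝ Q := by
  let e : EuclideanSpace ℝ (Fin N) ≃ₗ[ℝ] (Fin N → ℝ) := WithLp.linearEquiv 2 ℝ (Fin N → ℝ)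
  let Q' : Submodule ℝ (EuclideanSpace ℝ (Fin N)) := Q.comap e.toLinearMap
  let B := stdOrthonormalBasis ℝ Q'ᗮ
  refine ⟨_, Matrix.of fun b i => (B b : EuclideanSpace ℝ (Fin N)) i, ?_, ?_, ?_⟩
  · ext b b'
    have h := orthonormal_iff_ite.1 B.orthonormal b b'
    simp only [Submodule.coe_inner, PiLp.inner_apply, RCLike.inner_apply, conj_trivial] at h
    simp only [Matrix.mul_apply, Matrix.one_apply, Matrix.transpose_apply, Matrix.of_apply, ← h]
    exact sum_congr rfl fun _ _ => mul_comm _ _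
  · intro z hz
    ext b
    have hz' : e.symm z ∈ Q' := by simpa [Q'] using hz
    have h := (Submodule.mem_orthogonal Q' _).1 (B b).2 _ hz'
    simpa [Matrix.mulVec, dotProduct, PiLp.inner_apply, e, mul_comm] using h
  · have hQ' : Module.finrank ℝ Q' = Module.finrank ℝ Q := by
      rw [← LinearEquiv.finrank_map_eq e.symm Q, Submodule.map_equiv_eq_comap_symm]
      rfl
    have := Submodule.finrank_add_finrank_orthogonal Q'
    simp only [finrank_euclideanSpace, Fintype.card_fin] at this
    omega

lemma exists_isSymm_isIdempotentElem_vecMul_eq_zero (Q : Submodule ℝ (Fin N → ℝ)) :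
    ∃ P : Matrix (Fin N) (Fin N) ℝ, P.IsSymm ∧ IsIdempotentElem P ∧
      (N : ℝ) = P.trace + Module.finrank ℝ Q ∧ ∀ z ∈ Q, z ᵥ* P = 0 := by
  obtain ⟨m, V, hV, hVQ, hN⟩ := exists_orthonormal_rows_mulVec_eq_zero Q
  refine ⟨V.transpose * V, ?_, ?_, ?_, fun z hz => ?_⟩
  · simp [Matrix.IsSymm, Matrix.transpose_mul]
  · rw [IsIdempotentElem, Matrix.mul_assoc, ← Matrix.mul_assoc V, hV, Matrix.one_mul]
  · rw [Matrix.trace_mul_comm, hV, Matrix.trace_one, Fintype.card_fin]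
    exact_mod_cast hN
  · rw [← Matrix.vecMul_vecMul, Matrix.vecMul_transpose, hVQ z hz, Matrix.zero_vecMul]

lemma exists_le_rpow_mul_of_sum_le {γ : Type*} [Fintype γ] [Nonempty γ] {r q : ℝ}
    (hrq : r.HolderConjugate q) {A B D : γ → ℝ} (hB : ∀ g, 0 ≤ B g) (hD : ∀ g, 0 ≤ D g)
    (hABD : ∀ g, A g ≤ B g ^ (1 / r) * D g) {a b : ℝ}
    (ha : Fintype.card γ * a ≤ ∑ g, A g) (hb : ∑ g, B g ≤ Fintype.card γ * b) :
    ∃ g, a ≤ b ^ (1 / r) * D g := by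
  obtain ⟨g, hg⟩ := Finite.exists_max D
  refine ⟨g, ?_⟩
  have hcard : (0 : ℝ) < Fintype.card γ := by exact_mod_cast Fintype.card_pos
  have hb0 : 0 ≤ b := nonneg_of_mul_nonneg_right ((sum_nonneg fun g _ => hB g).trans hb) hcard
  have hholder := Real.inner_le_Lp_mul_Lq_of_nonneg univ hrq (f := fun g => B g ^ (1 / r))
    (g := D) (fun g _ => Real.rpow_nonneg (hB g) _) (fun g _ => hD g)
  simp_rw [← Real.rpow_mul (hB _), one_div_mul_cancel hrq.ne_zero, Real.rpow_one] at hholder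
  refine le_of_mul_le_mul_left ?_ hcard
  calc Fintype.card γ * a ≤ (∑ g, B g) ^ (1 / r) * (∑ g, D g ^ q) ^ (1 / q) :=
        ha.trans ((sum_le_sum fun g _ => hABD g).trans hholder)
    _ ≤ (Fintype.card γ * b) ^ (1 / r) * (Fintype.card γ * D g ^ q) ^ (1 / q) := by
        have hDg : ∑ g', D g' ^ q ≤ Fintype.card γ * D g ^ q := by
          refine (sum_le_sum fun g' _ =>
            Real.rpow_le_rpow (hD g') (hg g') hrq.symm.nonneg).trans_eq ?_
          simp
        have hD0 : 0 ≤ ∑ g', D g' ^ q := sum_nonneg fun g' _ => Real.rpow_nonneg (hD g') _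
        exact mul_le_mul (Real.rpow_le_rpow (sum_nonneg fun g' _ => hB g') hb hrq.one_div_nonneg)
          (Real.rpow_le_rpow hD0 hDg hrq.symm.one_div_nonneg) (Real.rpow_nonneg hD0 _)
          (Real.rpow_nonneg (by positivity) _)
    _ = Fintype.card γ ^ (1 / r + 1 / q) * (b ^ (1 / r) * (D g ^ q) ^ (1 / q)) := by
        rw [Real.mul_rpow hcard.le hb0, Real.mul_rpow hcard.le (Real.rpow_nonneg (hD g) _),
          Real.rpow_add hcard]
        ring
    _ = Fintype.card γ * (b ^ (1 / r) * D g) := by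
        rw [hrq.one_div_add_one_div, div_one, Real.rpow_one, ← Real.rpow_mul (hD g),
          mul_one_div_cancel hrq.symm.ne_zero, Real.rpow_one]

lemma sum_sum_mulVec_mul_eq (P : Matrix (Fin N) (Fin N) ℝ) (d w : Fin N → ℝ) :
    ∑ g : Fin N → Bool, ∑ i,
        (P *ᵥ fun j => rademacher (g j) * d j) i * (rademacher (g i) * w i) =
      2 ^ N * ∑ i, P i i * d i * w i := by
  have h := sum_sum_mul_rademacher_mul_rademacher fun i j => P i j * d j * w i
  rw [Fintype.card_fin] at h
  rw [← h]
  refine sum_congr rfl fun g _ => sum_congr rfl fun i _ => ?_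
  simp only [mulVec, dotProduct, sum_mul]
  exact sum_congr rfl fun j _ => by ring

lemma sum_sum_abs_mulVec_rpow_le {P : Matrix (Fin N) (Fin N) ℝ} (hsymm : P.IsSymm)
    (hidem : IsIdempotentElem P) {r : ℝ} (hr : 2 ≤ r) {d : Fin N → ℝ} (hd : ∀ j, 0 ≤ d j) :
    ∑ g : Fin N → Bool, ∑ i, |(P *ᵥ fun j => rademacher (g j) * d j) i| ^ r ≤
      2 ^ N * (2 * r ^ (r / 2)) * ∑ j, d j ^ r := by
  have hrow : ∀ i (g : Fin N → Bool), (P *ᵥ fun j => rademacher (g j) * d j) i =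
      ∑ j, P i j * d j * rademacher (g j) := fun i g => by
    simp only [mulVec, dotProduct]
    exact sum_congr rfl fun j _ => by ring
  calc ∑ g : Fin N → Bool, ∑ i, |(P *ᵥ fun j => rademacher (g j) * d j) i| ^ r
      = ∑ i, ∑ g : Fin N → Bool, |∑ j, P i j * d j * rademacher (g j)| ^ r := by
        rw [sum_comm]; simp_rw [hrow]
    _ ≤ ∑ i, 2 ^ N * (2 * r ^ (r / 2)) * (∑ j, (P i j * d j) ^ 2) ^ (r / 2) := by
        refine sum_le_sum fun i _ => ?_
        simpa using sum_abs_sum_mul_rademacher_rpow_le (fun j => P i j * d j) (by linarith)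
    _ ≤ 2 ^ N * (2 * r ^ (r / 2)) * ∑ j, d j ^ r := by
        rw [← mul_sum]
        exact mul_le_mul_of_nonneg_left (sum_rpow_sum_sq_mul_le hsymm hidem hr hd) (by positivity)

theorem exists_sum_diag_mul_rpow_le_distq {q r : ℝ} (hrq : r.HolderConjugate q) (hr : 2 ≤ r)
    {P : Matrix (Fin N) (Fin N) ℝ} (hsymm : P.IsSymm) (hidem : IsIdempotentElem P)
    {Q : Submodule ℝ (Fin N → ℝ)} (hPQ : ∀ z ∈ Q, z ᵥ* P = 0) {w : Fin N → ℝ}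
    (hw : ∀ i, 0 ≤ w i) :
    ∃ g : Fin N → Bool, ∑ i, P i i * w i ^ q ≤
      (2 * r ^ (r / 2) * ∑ i, w i ^ q) ^ (1 / r) *
        distq q (fun i => rademacher (g i) * w i) Q := by
  set d : Fin N → ℝ := fun j => w j ^ (q - 1)
  have hd : ∀ j, 0 ≤ d j := fun j => Real.rpow_nonneg (hw j) _
  have hdw : ∀ j, d j * w j = w j ^ q := fun j => by
    rw [← Real.rpow_add_one' (hw j) (by simp [hrq.symm.ne_zero]), sub_add_cancel]
  have hdr : ∀ j, d j ^ r = w j ^ q := fun j => by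
    rw [← Real.rpow_mul (hw j), hrq.symm.sub_one_mul_conj]
  set f : (Fin N → Bool) → Fin N → ℝ := fun g => P *ᵥ fun j => rademacher (g j) * d j
  have hf : ∀ g, ∀ z ∈ Q, ∑ i, f g i * z i = 0 := fun g z hz => by
    change (P *ᵥ _) ⬝ᵥ z = 0
    rw [dotProduct_comm, dotProduct_mulVec, hPQ z hz, zero_dotProduct]
  have hcard : (Fintype.card (Fin N → Bool) : ℝ) = 2 ^ N := by simp
  refine exists_le_rpow_mul_of_sum_le hrq (A := fun g => ∑ i, f g i * (rademacher (g i) * w i))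
    (fun g => by positivity) (fun g => distq_nonneg _ _ _)
    (fun g => sum_mul_le_distq hrq (hf g) _) ?_ ?_
  · rw [hcard, sum_sum_mulVec_mul_eq]
    simp_rw [mul_assoc, hdw, le_refl]
  · rw [hcard]
    simp_rw [← hdr]
    linarith [sum_sum_abs_mulVec_rpow_le hsymm hidem hr hd]

lemma exists_mem_sum_mul_sum_le_mul_sum_mul_comp {H : Subgroup (Equiv.Perm (Fin N))}
    (htrans : ∀ i j : Fin N, ∃ h ∈ H, h i = j) (w φ : Fin N → ℝ) :
    ∃ π ∈ H, (∑ i, w i) * ∑ j, φ j ≤ N * ∑ i, w i * φ (π i) := by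
  classical
  rcases isEmpty_or_nonempty (Fin N) with hN | ⟨⟨i₀⟩⟩
  · exact ⟨1, H.one_mem, by simp⟩
  have horbit : ∀ i, ∑ π : H, φ (π.1 i) = ∑ π : H, φ (π.1 i₀) := by
    intro i
    obtain ⟨h, hh, hhi⟩ := htrans i₀ i
    refine Fintype.sum_equiv (Equiv.mulRight ⟨h, hh⟩) _ _ fun π => ?_
    simp [hhi]
  have hmean : (N : ℝ) * ∑ π : H, φ (π.1 i₀) = Fintype.card H * ∑ j, φ j := by
    calc (N : ℝ) * ∑ π : H, φ (π.1 i₀) = ∑ i, ∑ π : H, φ (π.1 i) := by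
          simp [horbit]
      _ = ∑ π : H, ∑ j, φ j := by
          rw [sum_comm]
          exact sum_congr rfl fun π _ => Equiv.sum_comp π.1 φ
      _ = Fintype.card H * ∑ j, φ j := by simp
  have htotal : ∑ π : H, (N : ℝ) * ∑ i, w i * φ (π.1 i) =
      ∑ _π : H, (∑ i, w i) * ∑ j, φ j := by
    calc ∑ π : H, (N : ℝ) * ∑ i, w i * φ (π.1 i)
        = N * ∑ i, w i * ∑ π : H, φ (π.1 i) := by
          rw [← mul_sum, sum_comm]; simp_rw [mul_sum]
      _ = (∑ i, w i) * (N * ∑ π : H, φ (π.1 i₀)) := by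
          simp_rw [horbit, ← sum_mul]; ring
      _ = ∑ _π : H, (∑ i, w i) * ∑ j, φ j := by
          rw [hmean, sum_const, card_univ, nsmul_eq_mul]; ring
  obtain ⟨π, -, hπ⟩ := exists_le_of_sum_le univ_nonempty htotal.ge
  exact ⟨π, π.2, hπ⟩

def IsUnconditionalInvariant (H : Subgroup (Equiv.Perm (Fin N))) (K : Set (Fin N → ℝ)) : Prop :=
  ∀ π ∈ H, ∀ x ∈ K, ∀ ε' : Fin N → ℝ, (∀ i, ε' i = 1 ∨ ε' i = -1) →
    (fun i => ε' i * x (π i)) ∈ K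

lemma mul_abs_comp_mem {H : Subgroup (Equiv.Perm (Fin N))} {K : Set (Fin N → ℝ)}
    (hK : IsUnconditionalInvariant H K)
    {π : Equiv.Perm (Fin N)} (hπ : π ∈ H) {x : Fin N → ℝ} (hx : x ∈ K) {s : Fin N → ℝ}
    (hs : ∀ i, s i = 1 ∨ s i = -1) :
    (fun i => s i * |x (π i)|) ∈ K := by
  convert hK π hπ x hx (fun i => s i * if 0 ≤ x (π i) then 1 else -1) (fun i => ?_) using 2 with i
  · split_ifs with h
    · rw [abs_of_nonneg h, mul_one]
    · rw [abs_of_neg (not_le.1 h)]; ring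
  · split_ifs <;> rcases hs i with h | h <;> simp [h]

lemma div_rpow_mul_rpow_le_of_mul_le {q r ε C X D : ℝ} (hrq : r.HolderConjugate q) (hC : 0 < C)
    (hX : 0 ≤ X) (hD : 0 ≤ D) (h : ε * X ≤ (C * X) ^ (1 / r) * D) :
    ε / C ^ (1 / r) * X ^ (1 / q) ≤ D := by
  have hCr : 0 < C ^ (1 / r) := by positivity
  rcases hX.eq_or_lt with rfl | hX
  · rw [Real.zero_rpow hrq.symm.one_div_ne_zero, mul_zero]
    exact hD
  have hXr : 0 < X ^ (1 / r) := by positivity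
  rw [div_mul_eq_mul_div, div_le_iff₀ hCr, ← mul_le_mul_iff_of_pos_right hXr, mul_assoc,
    ← Real.rpow_add hX, add_comm, hrq.one_div_add_one_div, div_one, Real.rpow_one]
  calc ε * X ≤ (C * X) ^ (1 / r) * D := h
    _ = D * C ^ (1 / r) * X ^ (1 / r) := by rw [Real.mul_rpow hC.le hX.le]; ring

theorem exists_mem_div_mul_lqN_le_distq {q r ε : ℝ} (hrq : r.HolderConjugate q) (hr : 2 ≤ r)
    {H : Subgroup (Equiv.Perm (Fin N))} (htrans : ∀ i j : Fin N, ∃ h ∈ H, h i = j)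
    {K : Set (Fin N → ℝ)}
    (hK : IsUnconditionalInvariant H K)
    {n : ℕ} (hn : (n : ℝ) ≤ N * (1 - ε)) {x : Fin N → ℝ} (hx : x ∈ K)
    {Q : Submodule ℝ (Fin N → ℝ)} (hQ : Module.finrank ℝ Q ≤ n) :
    ∃ y ∈ K, ε / (2 * r ^ (r / 2)) ^ (1 / r) * lqN q x ≤ distq q y Q := by
  obtain ⟨P, hsymm, hidem, htrace, hPQ⟩ := exists_isSymm_isIdempotentElem_vecMul_eq_zero Q
  obtain ⟨π, hπ, havg⟩ := exists_mem_sum_mul_sum_le_mul_sum_mul_comp htrans (fun i => P i i)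
    (fun j => |x j| ^ q)
  obtain ⟨g, hg⟩ := exists_sum_diag_mul_rpow_le_distq hrq hr hsymm hidem hPQ
    (w := fun i => |x (π i)|) (fun i => abs_nonneg _)
  refine ⟨_, mul_abs_comp_mem hK hπ hx fun i => rademacher_eq_one_or_eq_neg_one (g i), ?_⟩
  have hperm : ∑ i, |x (π i)| ^ q = ∑ j, |x j| ^ q := Equiv.sum_comp π fun j => |x j| ^ q
  rw [hperm] at hg
  have hmass : ε * ∑ j, |x j| ^ q ≤ ∑ i, P i i * |x (π i)| ^ q := by
    rcases N.eq_zero_or_pos with rfl | hN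
    · simp
    have hN' : (0 : ℝ) < N := by exact_mod_cast hN
    have hQn : (Module.finrank ℝ Q : ℝ) ≤ n := by exact_mod_cast hQ
    refine le_of_mul_le_mul_left ?_ hN'
    calc N * (ε * ∑ j, |x j| ^ q) ≤ P.trace * ∑ j, |x j| ^ q := by
          rw [← mul_assoc]
          exact mul_le_mul_of_nonneg_right (by linarith) (by positivity)
      _ ≤ N * ∑ i, P i i * |x (π i)| ^ q := havg
  exact div_rpow_mul_rpow_le_of_mul_le hrq (by positivity) (by positivity) (distq_nonneg _ _ _)
    (hmass.trans hg)

lemma mul_iSup_lqN_le_dKol {q c : ℝ} {n : ℕ} {K : Set (Fin N → ℝ)} (hc : 0 ≤ c)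
    (h : ∀ x ∈ K, ∀ Q : Submodule ℝ (Fin N → ℝ), Module.finrank ℝ Q ≤ n →
      ∃ y ∈ K, c * lqN q x ≤ distq q y Q) :
    c * ⨆ x : K, lqN q x.1 ≤ dKol n q K := by
  have : Nonempty {Q : Submodule ℝ (Fin N → ℝ) // Module.finrank ℝ Q ≤ n} := ⟨⟨⊥, by simp⟩⟩
  refine le_ciInf fun Q => ?_
  have hsup : 0 ≤ ⨆ y : K, distq q y.1 Q.1 := Real.iSup_nonneg fun y => distq_nonneg q y.1 Q.1
  by_cases hbdd : BddAbove (Set.range fun x : K => lqN q x.1)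
  · have hbdd' : BddAbove (Set.range fun y : K => distq q y.1 Q.1) := by
      obtain ⟨B, hB⟩ := hbdd
      exact ⟨B, by rintro _ ⟨y, rfl⟩; exact (distq_le_lqN q y.1 Q.1).trans (hB ⟨y, rfl⟩)⟩
    rw [Real.mul_iSup_of_nonneg hc]
    refine Real.iSup_le (fun x => ?_) hsup
    obtain ⟨y, hy, hxy⟩ := h x x.2 Q.1 Q.2
    exact hxy.trans (le_ciSup hbdd' ⟨y, hy⟩)
  · rw [Real.iSup_of_not_bddAbove hbdd, mul_zero]
    exact hsup

end KolmogorovWidth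

/-- If `H ≤ S_N` acts transitively on coordinates and `K ⊆ ℝ^N` is unconditional and
`H`-invariant, then for `1 < q ≤ 2`, `ε ∈ (0,1)` and `n ≤ N(1-ε)`,
`d_n(K, ℓ_q^N) ≥ c(q,ε) sup_{x ∈ K} ‖x‖_q`. -/
theorem stmt15 (q ε : ℝ) (hq1 : 1 < q) (hq2 : q ≤ 2) (hε : ε ∈ Set.Ioo (0:ℝ) 1) :
    ∃ c > 0, ∀ (N : ℕ) (H : Subgroup (Equiv.Perm (Fin N))),
      (∀ i j : Fin N, ∃ h ∈ H, h i = j) →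
      ∀ K : Set (Fin N → ℝ),
      (∀ π ∈ H, ∀ x ∈ K, ∀ ε' : Fin N → ℝ, (∀ i, ε' i = 1 ∨ ε' i = -1) →
        (fun i => ε' i * x (π i)) ∈ K) →
      ∀ n : ℕ, (n : ℝ) ≤ N * (1 - ε) →
      dKol n q K ≥ c * ⨆ x : K, lqN q x.1 := by
  set r := q / (q - 1)
  have hrq : r.HolderConjugate q := (Real.HolderConjugate.conjExponent hq1).symm
  have hr : 2 ≤ r := by
    rw [le_div_iff₀ (by linarith)]
    linarith
  have hc : 0 < ε / (2 * r ^ (r / 2)) ^ (1 / r) := by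
    have := hε.1
    have := hrq.pos
    positivity
  refine ⟨_, hc, fun N H htrans K hK n hn => ?_⟩
  exact KolmogorovWidth.mul_iSup_lqN_le_dKol hc.le fun x hx Q hQ =>
    KolmogorovWidth.exists_mem_div_mul_lqN_le_distq hrq hr htrans hK hn hx hQ
end
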